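/- Let n have prime factorization p₁^{n₁}⋯p_k^{n_k}. The number of maximal cliques in the endomorphism graph EG(Z_n) equals the multinomial coefficient (n₁+⋯+n_k)!/(n₁!⋯n_k!). -/

import Mathlib

lemma zmod_dvd_iff (n : ℕ) [NeZero n] (x y : ZMod n) :
    (∃ c : ZMod n, c * x = y) ↔ Nat.gcd x.val n ∣ y.val := by
  constructor
  · rintro ⟨c, rfl⟩
    rw [ZMod.val_mul]
    exact (Nat.dvd_mod_iff (Nat.gcd_dvd_right _ _)).2
      (Dvd.dvd.mul_left (Nat.gcd_dvd_left _ _) _)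
  · rintro ⟨k, hk⟩
    have hg : ((Nat.gcd x.val n : ℕ) : ZMod n) = (Nat.gcdA x.val n : ZMod n) * x := by
      have := Nat.gcd_eq_gcd_ab x.val n
      have h2 : ((Nat.gcd x.val n : ℤ) : ZMod n) = ((x.val * Nat.gcdA x.val n + n * Nat.gcdB x.val n : ℤ) : ZMod n) := by
        rw [this]
      push_cast at h2
      rw [ZMod.natCast_self, zero_mul, add_zero, ZMod.natCast_zmod_val] at h2
      rw [h2]; ring
    refine ⟨(k : ZMod n) * (Nat.gcdA x.val n : ZMod n), ?_⟩
    have : ((y.val : ℕ) : ZMod n) = y := ZMod.natCast_zmod_val y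
    rw [← this, hk]
    push_cast
    rw [hg]; ring

/-- The endomorphism graph of the cyclic group `Z_n`. -/
def EGZ (n : ℕ) : SimpleGraph (ZMod n) :=
  SimpleGraph.fromRel (fun x y => ∃ f : AddMonoid.End (ZMod n), f x = y)

lemma end_exists_iff (n : ℕ) [NeZero n] (x y : ZMod n) :
    (∃ f : AddMonoid.End (ZMod n), f x = y) ↔ ∃ c : ZMod n, c * x = y := by
  constructor
  · rintro ⟨f, rfl⟩
    refine ⟨f 1, ?_⟩
    calc f 1 * x = x.val • f 1 := by rw [nsmul_eq_mul, ZMod.natCast_zmod_val, mul_comm]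
      _ = f (x.val • (1 : ZMod n)) := (map_nsmul f _ _).symm
      _ = f x := by rw [nsmul_eq_mul, mul_one, ZMod.natCast_zmod_val]
  · rintro ⟨c, rfl⟩
    exact ⟨AddMonoidHom.mulLeft c, rfl⟩

lemma EGZ_adj (n : ℕ) [NeZero n] (x y : ZMod n) :
    (EGZ n).Adj x y ↔ x ≠ y ∧
      (Nat.gcd x.val n ∣ Nat.gcd y.val n ∨ Nat.gcd y.val n ∣ Nat.gcd x.val n) := by
  have key : ∀ a b : ZMod n,
      (∃ f : AddMonoid.End (ZMod n), f a = b) ↔ Nat.gcd a.val n ∣ Nat.gcd b.val n := by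
    intro a b
    rw [end_exists_iff, zmod_dvd_iff]
    constructor
    · intro h; exact Nat.dvd_gcd h (Nat.gcd_dvd_right _ _)
    · intro h; exact h.trans (Nat.gcd_dvd_left _ _)
  simp only [EGZ, SimpleGraph.fromRel_adj, key]

open Finset

/-- Maximal chains in the divisor lattice of `n`. -/
def IsMaxChainOf (n : ℕ) (C : Finset ℕ) : Prop :=
  C ⊆ n.divisors ∧ IsChain (· ∣ ·) (C : Set ℕ) ∧
    ∀ d ∈ n.divisors, IsChain (· ∣ ·) (insert d (C : Set ℕ)) → d ∈ C

lemma IsMaxChainOf.self_mem {n : ℕ} {C : Finset ℕ} (hn : n ≠ 0) (h : IsMaxChainOf n C) :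
    n ∈ C := by
  refine h.2.2 n (Nat.mem_divisors_self n hn) (h.2.1.insert fun b hb _ => ?_)
  exact Or.inr ((Nat.mem_divisors.mp (h.1 hb)).1)

lemma IsMaxChainOf.one_mem {n : ℕ} {C : Finset ℕ} (hn : n ≠ 0) (h : IsMaxChainOf n C) :
    (1 : ℕ) ∈ C := by
  refine h.2.2 1 (Nat.one_mem_divisors.mpr hn) (h.2.1.insert fun b hb _ => Or.inl (one_dvd b))

lemma IsMaxChainOf.dvd_of_mem {n : ℕ} {C : Finset ℕ} (h : IsMaxChainOf n C) {d : ℕ}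
    (hd : d ∈ C) : d ∣ n := (Nat.mem_divisors.mp (h.1 hd)).1

lemma sandwich {m d n p : ℕ} (hm : m ∣ n) (hp : p.Prime) (hq : n / m = p)
    (h1 : m ∣ d) (h2 : d ∣ n) (hn : n ≠ 0) : d = m ∨ d = n := by
  obtain ⟨e, rfl⟩ := h1
  have hm0 : 0 < m := Nat.pos_of_ne_zero (by rintro rfl; simp at hq; omega)
  have he : e ∣ p := by
    rw [← hq]
    exact (Nat.mul_dvd_mul_iff_left hm0).mp (by rwa [Nat.mul_div_cancel' hm])
  rcases (Nat.Prime.eq_one_or_self_of_dvd hp e he) with rfl | rfl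
  · exact Or.inl (mul_one m)
  · right
    rw [← hq, Nat.mul_div_cancel' hm]

/-- Inserting `n` into a maximal chain of `n/p` gives a maximal chain of `n`. -/
lemma insert_isMaxChainOf {n p : ℕ} (hn : n ≠ 0) (hp : p ∈ n.primeFactors)
    {C : Finset ℕ} (hC : IsMaxChainOf (n / p) C) : IsMaxChainOf n (insert n C) := by
  obtain ⟨hpp, hpd, -⟩ := Nat.mem_primeFactors.mp hp
  set m := n / p with hmdef
  have hmdvd : m ∣ n := Nat.div_dvd_of_dvd hpd
  have hm0 : m ≠ 0 := by
    have := Nat.le_of_dvd (Nat.pos_of_ne_zero hn) hpd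
    have := Nat.div_pos this hpp.pos
    omega
  have hq : n / m = p := Nat.div_div_self hpd hn
  have hdall : ∀ d ∈ C, d ∣ m := fun d hd => hC.dvd_of_mem hd
  have hmC : m ∈ C := hC.self_mem hm0
  refine ⟨?_, ?_, ?_⟩
  · intro d hd
    rcases Finset.mem_insert.mp hd with rfl | hd
    · exact Nat.mem_divisors_self d hn
    · exact Nat.mem_divisors.mpr ⟨(hdall d hd).trans hmdvd, hn⟩
  · rw [Finset.coe_insert]
    exact hC.2.1.insert fun b hb _ => Or.inr ((hdall b hb).trans hmdvd)
  · intro d hdmem hchain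
    rcases eq_or_ne d n with rfl | hdn
    · exact Finset.mem_insert_self _ _
    have hddvd : d ∣ n := (Nat.mem_divisors.mp hdmem).1
    have hdm : d ∣ m := by
      rcases eq_or_ne d m with rfl | hdm'
      · exact dvd_rfl
      have hcomp : d ∣ m ∨ m ∣ d := by
        refine hchain.total (Set.mem_insert _ _) ?_
        exact Set.mem_insert_iff.mpr (Or.inr (by rw [Finset.coe_insert]; exact Set.mem_insert_iff.mpr (Or.inr hmC)))
      rcases hcomp with h | h
      · exact h
      · rcases sandwich hmdvd hpp hq h hddvd hn with rfl | rfl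
        · exact dvd_rfl
        · exact absurd rfl hdn
    have hchain' : IsChain (· ∣ ·) (insert d (C : Set ℕ)) := by
      refine hchain.mono ?_
      intro x hx
      rcases Set.mem_insert_iff.mp hx with rfl | hx
      · exact Set.mem_insert _ _
      · rw [Finset.coe_insert]
        exact Set.mem_insert_iff.mpr (Or.inr (Set.mem_insert_iff.mpr (Or.inr hx)))
    exact Finset.mem_insert.mpr (Or.inr (hC.2.2 d (Nat.mem_divisors.mpr ⟨hdm, hm0⟩) hchain'))

lemma decomp {n : ℕ} (hn : 1 < n) {C : Finset ℕ} (hC : IsMaxChainOf n C) :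
    ∃ p ∈ n.primeFactors, IsMaxChainOf (n / p) (C.erase n) ∧ C = insert n (C.erase n) := by
  have hn0 : n ≠ 0 := by omega
  have hnC : n ∈ C := hC.self_mem hn0
  have h1C : (1 : ℕ) ∈ C := hC.one_mem hn0
  have h1e : (1 : ℕ) ∈ C.erase n := Finset.mem_erase.mpr ⟨by omega, h1C⟩
  have hne : (C.erase n).Nonempty := ⟨1, h1e⟩
  set m := (C.erase n).max' hne with hmdef
  have hmE : m ∈ C.erase n := Finset.max'_mem _ hne
  obtain ⟨hmn, hmC⟩ := Finset.mem_erase.mp hmE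
  have hmdvd : m ∣ n := hC.dvd_of_mem hmC
  have hm0 : m ≠ 0 := by intro h; rw [h] at hmdvd; exact hn0 (Nat.zero_dvd.mp hmdvd)
  have hmlt : m < n := lt_of_le_of_ne (Nat.le_of_dvd (by omega) hmdvd) hmn
  -- every element of the erased chain divides m
  have hdivm : ∀ d ∈ C.erase n, d ∣ m := by
    intro d hd
    rcases eq_or_ne d m with rfl | hdm
    · exact dvd_rfl
    have hdC := (Finset.mem_erase.mp hd).2
    rcases hC.2.1 hdC hmC hdm with h | h
    · exact h
    · have hd0 : 0 < d := Nat.pos_of_mem_divisors (hC.1 hdC)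
      have := Nat.le_of_dvd (by
        rcases Nat.eq_zero_or_pos d with rfl | h'
        · omega
        · exact h') h
      have := Finset.le_max' _ d hd
      omega
  -- n / m is prime
  have hq : (n / m).Prime := by
    by_contra hnp
    have hne1 : n / m ≠ 1 := by
      intro h
      have : n = m := by
        have := Nat.div_mul_cancel hmdvd
        rw [h, one_mul] at this
        omega
      omega
    have hne0 : n / m ≠ 0 := by
      have := Nat.div_pos (Nat.le_of_dvd (by omega) hmdvd) (Nat.pos_of_ne_zero hm0)
      omega
    obtain ⟨q, hqp, hqd⟩ := Nat.exists_prime_and_dvd hne1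
    have hqne : q ≠ n / m := fun h => hnp (h ▸ hqp)
    set c := m * q with hcdef
    have hcn : c ∣ n := by
      have : m * q ∣ m * (n / m) := Nat.mul_dvd_mul_left m hqd
      rwa [Nat.mul_div_cancel' hmdvd] at this
    have hcnn : c ≠ n := by
      intro h
      apply hqne
      have : m * q = m * (n / m) := by rw [Nat.mul_div_cancel' hmdvd, ← hcdef, h]
      exact Nat.eq_of_mul_eq_mul_left (Nat.pos_of_ne_zero hm0) this
    have hcm : c ≠ m := by
      have h2 := hqp.two_le
      have h3 := Nat.pos_of_ne_zero hm0
      have : m < m * q := by nlinarith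
      omega
    have hcnotC : c ∉ C := by
      intro h
      have hce : c ∈ C.erase n := Finset.mem_erase.mpr ⟨hcnn, h⟩
      have : c ∣ m := hdivm c hce
      have : m ∣ c := Dvd.intro q rfl
      exact hcm (Nat.dvd_antisymm ‹c ∣ m› this)
    have hchain : IsChain (· ∣ ·) (insert c (C : Set ℕ)) := by
      refine hC.2.1.insert fun b hb hcb => ?_
      rcases eq_or_ne b n with rfl | hbn
      · exact Or.inl hcn
      · exact Or.inr ((hdivm b (Finset.mem_erase.mpr ⟨hbn, hb⟩)).trans (Dvd.intro q rfl))
    exact hcnotC (hC.2.2 c (Nat.mem_divisors.mpr ⟨hcn, hn0⟩) hchain)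
  refine ⟨n / m, Nat.mem_primeFactors.mpr ⟨hq, Nat.div_dvd_of_dvd hmdvd, hn0⟩, ?_, ?_⟩
  · have hmm : n / (n / m) = m := Nat.div_div_self hmdvd hn0
    rw [hmm]
    refine ⟨?_, ?_, ?_⟩
    · intro d hd
      exact Nat.mem_divisors.mpr ⟨hdivm d hd, hm0⟩
    · exact hC.2.1.mono (Finset.coe_subset.mpr (Finset.erase_subset _ _))
    · intro d hdmem hchain
      have hdm : d ∣ m := (Nat.mem_divisors.mp hdmem).1
      have hCE : (C : Set ℕ) = insert n ↑(C.erase n) := by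
        conv_lhs => rw [← Finset.insert_erase hnC]
        rw [Finset.coe_insert]
      have hchain' : IsChain (· ∣ ·) (insert d (C : Set ℕ)) := by
        rw [hCE, Set.insert_comm]
        refine hchain.insert fun b hb hnb => ?_
        rcases Set.mem_insert_iff.mp hb with rfl | hb
        · exact Or.inr (hdm.trans hmdvd)
        · exact Or.inr ((hdivm b hb).trans hmdvd)
      have hdC : d ∈ C := hC.2.2 d (Nat.mem_divisors.mpr ⟨hdm.trans hmdvd, hn0⟩) hchain'
      refine Finset.mem_erase.mpr ⟨?_, hdC⟩
      have := Nat.le_of_dvd (Nat.pos_of_ne_zero hm0) hdm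
      omega
  · rw [Finset.insert_erase hnC]

noncomputable def chainSet (n : ℕ) : Finset (Finset ℕ) :=
  @Finset.filter _ (IsMaxChainOf n) (Classical.decPred _) n.divisors.powerset

lemma mem_chainSet {n : ℕ} {C : Finset ℕ} : C ∈ chainSet n ↔ IsMaxChainOf n C := by
  unfold chainSet
  rw [@Finset.mem_filter _ _ (Classical.decPred _), Finset.mem_powerset]
  exact ⟨fun h => h.2, fun h => ⟨h.1, h⟩⟩

lemma chainSet_one : chainSet 1 = {{1}} := by
  ext C
  rw [mem_chainSet, Finset.mem_singleton]
  constructor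
  · intro h
    have h1 : (1 : ℕ) ∈ C := h.one_mem one_ne_zero
    refine Finset.eq_singleton_iff_unique_mem.mpr ⟨h1, fun x hx => ?_⟩
    have := h.1 hx
    simpa [Nat.divisors_one] using this
  · rintro rfl
    refine ⟨by simp [Nat.divisors_one], ?_, ?_⟩
    · intro a ha b hb hab; simp at ha hb; subst ha; subst hb; simp at hab
    · intro d hd _
      simp [Nat.divisors_one] at hd
      simp [hd]

lemma not_mem_of_chainSet_div {n p : ℕ} (hn : n ≠ 0) (hp : p ∈ n.primeFactors)
    {C : Finset ℕ} (hC : C ∈ chainSet (n / p)) : n ∉ C := by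
  rw [mem_chainSet] at hC
  intro h
  have hd : n ∣ n / p := hC.dvd_of_mem h
  have hpp := (Nat.mem_primeFactors.mp hp).1
  have hpd := (Nat.mem_primeFactors.mp hp).2.1
  have h1 : n / p ∣ n := Nat.div_dvd_of_dvd hpd
  have h2 : n / p = n := Nat.dvd_antisymm h1 hd
  have h4 := Nat.div_div_self hpd hn
  have h5 := hpp.two_le
  have h6 := Nat.pos_of_ne_zero hn
  rw [h2, Nat.div_self h6] at h4
  omega

lemma chainSet_eq_biUnion {n : ℕ} (hn : 1 < n) :
    chainSet n = n.primeFactors.biUnion (fun p => (chainSet (n / p)).image (insert n)) := by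
  ext C
  rw [Finset.mem_biUnion]
  constructor
  · intro hC
    rw [mem_chainSet] at hC
    obtain ⟨p, hp, hmc, hCeq⟩ := decomp hn hC
    exact ⟨p, hp, Finset.mem_image.mpr ⟨C.erase n, mem_chainSet.mpr hmc, hCeq.symm⟩⟩
  · rintro ⟨p, hp, hC⟩
    obtain ⟨C', hC', rfl⟩ := Finset.mem_image.mp hC
    exact mem_chainSet.mpr (insert_isMaxChainOf (by omega) hp (mem_chainSet.mp hC'))

lemma chainSet_card_rec {n : ℕ} (hn : 1 < n) :
    (chainSet n).card = ∑ p ∈ n.primeFactors, (chainSet (n / p)).card := by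
  have hn0 : n ≠ 0 := by omega
  rw [chainSet_eq_biUnion hn, Finset.card_biUnion]
  · refine Finset.sum_congr rfl fun p hp => ?_
    refine Finset.card_image_of_injOn fun C₁ h₁ C₂ h₂ h => ?_
    have e₁ := not_mem_of_chainSet_div hn0 hp (Finset.mem_coe.mp h₁)
    have e₂ := not_mem_of_chainSet_div hn0 hp (Finset.mem_coe.mp h₂)
    have := congrArg (Finset.erase · n) h
    simpa [Finset.erase_insert e₁, Finset.erase_insert e₂] using this
  · intro p hp q hq hpq
    simp only [Finset.disjoint_left]
    intro C hCp hCq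
    obtain ⟨C₁, hC₁, rfl⟩ := Finset.mem_image.mp hCp
    obtain ⟨C₂, hC₂, he⟩ := Finset.mem_image.mp hCq
    have e₁ := not_mem_of_chainSet_div hn0 hp hC₁
    have e₂ := not_mem_of_chainSet_div hn0 hq hC₂
    have hC12 : C₁ = C₂ := by
      have := congrArg (Finset.erase · n) he
      simpa [Finset.erase_insert e₁, Finset.erase_insert e₂] using this.symm
    subst hC12
    rw [mem_chainSet] at hC₁ hC₂
    have hpd := (Nat.mem_primeFactors.mp hp).2.1
    have hqd := (Nat.mem_primeFactors.mp hq).2.1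
    have hp0 : n / p ≠ 0 := by
      have := Nat.div_pos (Nat.le_of_dvd (by omega) hpd) (Nat.mem_primeFactors.mp hp).1.pos
      omega
    have hq0 : n / q ≠ 0 := by
      have := Nat.div_pos (Nat.le_of_dvd (by omega) hqd) (Nat.mem_primeFactors.mp hq).1.pos
      omega
    have h1 : n / p ∣ n / q := hC₂.dvd_of_mem (hC₁.self_mem hp0)
    have h2 : n / q ∣ n / p := hC₁.dvd_of_mem (hC₂.self_mem hq0)
    have h3 : n / p = n / q := Nat.dvd_antisymm h1 h2
    apply hpq
    have hp' : p = n / (n / p) := (Nat.div_div_self hpd hn0).symm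
    have hq' : q = n / (n / q) := (Nat.div_div_self hqd hn0).symm
    rw [hp', hq', h3]

open Nat in
lemma multinomial_subset {α : Type*} (s t : Finset α) (f : α → ℕ) (h : s ⊆ t)
    (h0 : ∀ a ∈ t, a ∉ s → f a = 0) : Nat.multinomial t f = Nat.multinomial s f := by
  unfold Nat.multinomial
  rw [← Finset.sum_subset h h0, ← Finset.prod_subset h (fun a ha hna => by
    rw [h0 a ha hna]; rfl)]

open Nat in
lemma multinomial_sum_update {α : Type*} [DecidableEq α] (s : Finset α) (hs : s.Nonempty)
    (f : α → ℕ) (hf : ∀ a ∈ s, 1 ≤ f a) :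
    Nat.multinomial s f = ∑ a ∈ s, Nat.multinomial s (Function.update f a (f a - 1)) := by
  have hP : 0 < ∏ i ∈ s, (f i)! := Finset.prod_pos fun i _ => Nat.factorial_pos _
  have hN : 0 < ∑ i ∈ s, f i := by
    obtain ⟨a, ha⟩ := hs
    have := hf a ha
    calc 0 < f a := this
    _ ≤ ∑ i ∈ s, f i := Finset.single_le_sum (fun i _ => Nat.zero_le _) ha
  apply Nat.eq_of_mul_eq_mul_left hP
  rw [Finset.mul_sum]
  have key : ∀ a ∈ s, (∏ i ∈ s, (f i)!) * Nat.multinomial s (Function.update f a (f a - 1))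
      = f a * ((∑ i ∈ s, f i) - 1)! := by
    intro a ha
    have hup : ∀ i, (Function.update f a (f a - 1) i)! =
        Function.update (fun j => (f j)!) a ((f a - 1)!) i := fun i =>
      (Function.apply_update (fun _ n => n !) f a (f a - 1) i)
    have h1 : ∏ i ∈ s, (Function.update f a (f a - 1) i)! =
        (f a - 1)! * ∏ i ∈ s \ {a}, (f i)! := by
      rw [Finset.prod_congr rfl fun i _ => hup i]
      exact Finset.prod_update_of_mem ha _ _
    have h2 : ∏ i ∈ s, (f i)! = (f a)! * ∏ i ∈ s \ {a}, (f i)! :=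
      Finset.prod_eq_mul_prod_sdiff_singleton_of_mem ha _
    have h3 : ∑ i ∈ s, Function.update f a (f a - 1) i = (f a - 1) + ∑ i ∈ s \ {a}, f i :=
      Finset.sum_update_of_mem ha _ _
    have h4 : ∑ i ∈ s, f i = f a + ∑ i ∈ s \ {a}, f i :=
      Finset.sum_eq_add_sum_sdiff_singleton_of_mem ha _
    have h5 : ∑ i ∈ s, Function.update f a (f a - 1) i = (∑ i ∈ s, f i) - 1 := by
      have := hf a ha
      omega
    have hspec := Nat.multinomial_spec s (Function.update f a (f a - 1))
    rw [h1, h5] at hspec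
    calc (∏ i ∈ s, (f i)!) * Nat.multinomial s (Function.update f a (f a - 1))
        = f a * (((f a - 1)! * ∏ i ∈ s \ {a}, (f i)!) *
            Nat.multinomial s (Function.update f a (f a - 1))) := by
          rw [h2, ← Nat.mul_factorial_pred (Nat.one_le_iff_ne_zero.mp (hf a ha))]; ring
      _ = f a * ((∑ i ∈ s, f i) - 1)! := by rw [hspec]
  rw [Finset.sum_congr rfl key, ← Finset.sum_mul, Nat.multinomial_spec,
    ← Nat.mul_factorial_pred hN.ne']

lemma multinomial_rec {n : ℕ} (hn : 1 < n) :
    Nat.multinomial n.primeFactors (fun p => n.factorization p) =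
      ∑ p ∈ n.primeFactors, Nat.multinomial (n / p).primeFactors
        (fun q => (n / p).factorization q) := by
  have hn0 : n ≠ 0 := by omega
  rw [multinomial_sum_update _ (Nat.nonempty_primeFactors.mpr hn) _
    (fun p hp => (Nat.Prime.factorization_pos_of_dvd (Nat.mem_primeFactors.mp hp).1 hn0
      (Nat.mem_primeFactors.mp hp).2.1))]
  refine Finset.sum_congr rfl fun p hp => ?_
  obtain ⟨hpp, hpd, -⟩ := Nat.mem_primeFactors.mp hp
  have hnp0 : n / p ≠ 0 := by
    have := Nat.div_pos (Nat.le_of_dvd (by omega) hpd) hpp.pos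
    omega
  have hpt : ∀ q, (n / p).factorization q = Function.update
      (fun q => n.factorization q) p (n.factorization p - 1) q := by
    intro q
    have hfd := Nat.factorization_div hpd
    have : (n / p).factorization q = n.factorization q - (Nat.factorization p) q := by
      rw [hfd]; rfl
    rw [this, hpp.factorization]
    rcases eq_or_ne q p with rfl | hqp
    · simp [Function.update]
    · simp [Function.update, hqp, Finsupp.single_apply, Ne.symm hqp]
  have step1 : Nat.multinomial n.primeFactors (fun q => (n / p).factorization q) =
      Nat.multinomial (n / p).primeFactors (fun q => (n / p).factorization q) := by
    refine multinomial_subset _ _ _ (Nat.primeFactors_mono (Nat.div_dvd_of_dvd hpd) hn0) ?_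
    intro q _ hq
    have : q ∉ (Nat.factorization (n / p)).support := by
      rwa [Nat.support_factorization]
    exact Finsupp.notMem_support_iff.mp this
  rw [← step1]
  exact Nat.multinomial_congr fun q _ => (hpt q).symm

lemma chainSet_card : ∀ n : ℕ, n ≠ 0 →
    (chainSet n).card = Nat.multinomial n.primeFactors (fun p => n.factorization p) := by
  intro n
  induction n using Nat.strong_induction_on with
  | _ n ih =>
    intro hn0
    rcases eq_or_lt_of_le (Nat.one_le_iff_ne_zero.mpr hn0) with h1 | h1
    · rw [← h1, chainSet_one]
      simp
    · rw [chainSet_card_rec h1, multinomial_rec h1]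
      refine Finset.sum_congr rfl fun p hp => ?_
      obtain ⟨hpp, hpd, -⟩ := Nat.mem_primeFactors.mp hp
      have hlt : n / p < n := Nat.div_lt_self (by omega) hpp.one_lt
      have hnp0 : n / p ≠ 0 := by
        have := Nat.div_pos (Nat.le_of_dvd (by omega) hpd) hpp.pos
        omega
      exact ih _ hlt hnp0

section Graph

def IsMaxCliqueZ (n : ℕ) (s : Finset (ZMod n)) : Prop :=
  (EGZ n).IsClique ↑s ∧ ∀ t : Finset (ZMod n), (EGZ n).IsClique ↑t → s ⊆ t → s = t

variable {n : ℕ} [NeZero n]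

/-- The gcd labelling map. -/
def zg (x : ZMod n) : ℕ := Nat.gcd x.val n

lemma zg_mem_divisors (x : ZMod n) : zg x ∈ n.divisors :=
  Nat.mem_divisors.mpr ⟨Nat.gcd_dvd_right _ _, NeZero.ne n⟩

lemma zg_natCast {d : ℕ} (hd : d ∣ n) : zg ((d : ZMod n)) = d := by
  unfold zg
  rw [ZMod.val_natCast, ← Nat.gcd_rec]
  exact Nat.gcd_eq_right hd

lemma EGZ_adj' (x y : ZMod n) :
    (EGZ n).Adj x y ↔ x ≠ y ∧ (zg x ∣ zg y ∨ zg y ∣ zg x) := EGZ_adj n x y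

lemma clique_image_isChain {s : Finset (ZMod n)} (hs : (EGZ n).IsClique ↑s) :
    IsChain (· ∣ ·) ((s.image zg : Finset ℕ) : Set ℕ) := by
  intro a ha b hb hab
  simp only [Finset.coe_image, Set.mem_image, Finset.mem_coe] at ha hb
  obtain ⟨x, hx, rfl⟩ := ha
  obtain ⟨y, hy, rfl⟩ := hb
  have hxy : x ≠ y := fun h => hab (by rw [h])
  have := (EGZ_adj' x y).mp (hs hx hy hxy)
  exact this.2

lemma maxClique_image {s : Finset (ZMod n)} (hs : IsMaxCliqueZ n s) :
    IsMaxChainOf n (s.image zg) := by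
  refine ⟨fun d hd => ?_, clique_image_isChain hs.1, ?_⟩
  · obtain ⟨x, -, rfl⟩ := Finset.mem_image.mp hd
    exact zg_mem_divisors x
  · intro d hd hchain
    have hdn : d ∣ n := (Nat.mem_divisors.mp hd).1
    set xd : ZMod n := (d : ZMod n) with hxd
    have hgxd : zg xd = d := zg_natCast hdn
    have hclique : (EGZ n).IsClique (insert xd ↑s) := by
      refine hs.1.insert fun y hy hne => ?_
      refine (EGZ_adj' xd y).mpr ⟨fun h => hne (h ▸ rfl), ?_⟩
      rw [hgxd]
      have hgy : zg y ∈ insert d ((s.image zg : Finset ℕ) : Set ℕ) :=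
        Set.mem_insert_iff.mpr (Or.inr (by
          simp only [Finset.coe_image, Set.mem_image, Finset.mem_coe]
          exact ⟨y, hy, rfl⟩))
      exact hchain.total (Set.mem_insert _ _) hgy
    have : s = insert xd s := hs.2 (insert xd s) (by rwa [Finset.coe_insert]) 
      (Finset.subset_insert _ _)
    have hxs : xd ∈ s := this ▸ Finset.mem_insert_self xd s
    exact Finset.mem_image.mpr ⟨xd, hxs, hgxd⟩

lemma maxClique_mem_iff {s : Finset (ZMod n)} (hs : IsMaxCliqueZ n s) (x : ZMod n) :
    x ∈ s ↔ zg x ∈ s.image zg := by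
  constructor
  · exact fun h => Finset.mem_image.mpr ⟨x, h, rfl⟩
  · intro hx
    have hclique : (EGZ n).IsClique (insert x ↑s) := by
      refine hs.1.insert fun y hy hne => ?_
      refine (EGZ_adj' x y).mpr ⟨hne.symm.symm, ?_⟩
      have hgy : zg y ∈ (s.image zg : Finset ℕ) := Finset.mem_image.mpr ⟨y, hy, rfl⟩
      rcases eq_or_ne (zg x) (zg y) with h | h
      · exact Or.inl (h ▸ dvd_rfl)
      · exact (clique_image_isChain hs.1) hx hgy h
    have : s = insert x s := hs.2 (insert x s) (by rwa [Finset.coe_insert])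
      (Finset.subset_insert _ _)
    exact this ▸ Finset.mem_insert_self x s

lemma chain_filter_maxClique {C : Finset ℕ} (hC : IsMaxChainOf n C) :
    IsMaxCliqueZ n (Finset.univ.filter (fun x => zg x ∈ C)) := by
  constructor
  · intro x hx y hy hxy
    simp only [Finset.coe_filter, Set.mem_setOf_eq] at hx hy
    refine (EGZ_adj' x y).mpr ⟨hxy, ?_⟩
    rcases eq_or_ne (zg x) (zg y) with h | h
    · exact Or.inl (h ▸ dvd_rfl)
    · exact hC.2.1 hx.2 hy.2 h
  · intro t ht hsub
    refine Finset.Subset.antisymm hsub fun x hx => ?_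
    have hgx : zg x ∈ C := by
      refine hC.2.2 (zg x) (zg_mem_divisors x) ?_
      refine hC.2.1.insert fun b hb hne => ?_
      have hbn : b ∣ n := hC.dvd_of_mem hb
      set yb : ZMod n := (b : ZMod n) with hyb
      have hgyb : zg yb = b := zg_natCast hbn
      have hybs : yb ∈ Finset.univ.filter (fun x => zg x ∈ C) := by
        simp only [Finset.mem_filter, Finset.mem_univ, true_and]
        rw [hgyb]; exact hb
      have hybt : yb ∈ t := hsub hybs
      have hxyb : x ≠ yb := fun h => hne (by rw [h, hgyb])
      have := (EGZ_adj' x yb).mp (ht hx hybt hxyb)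
      rw [hgyb] at this
      exact this.2
    simp only [Finset.mem_filter, Finset.mem_univ, true_and]
    exact hgx

lemma image_filter_chain {C : Finset ℕ} (hC : IsMaxChainOf n C) :
    (((Finset.univ : Finset (ZMod n))).filter (fun x => zg x ∈ C)).image zg = C := by
  ext d
  simp only [Finset.mem_image, Finset.mem_filter, Finset.mem_univ, true_and]
  constructor
  · rintro ⟨x, hx, rfl⟩; exact hx
  · intro hd
    have hdn : d ∣ n := hC.dvd_of_mem hd
    exact ⟨(d : ZMod n), by rw [zg_natCast hdn]; exact hd, zg_natCast hdn⟩

end Graph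

/-- The number of maximal cliques in `EG(Z_n)` is the multinomial coefficient
`(n₁ + ⋯ + n_k)! / (n₁! ⋯ n_k!)` where `n = p₁^{n₁} ⋯ p_k^{n_k}`. -/
theorem zmod_endomorphism_graph_maximal_cliques (n : ℕ) (hn : 0 < n) :
    {s : Finset (ZMod n) | (EGZ n).IsClique ↑s ∧
        ∀ t : Finset (ZMod n), (EGZ n).IsClique ↑t → s ⊆ t → s = t}.ncard =
      Nat.multinomial n.primeFactors (fun p => n.factorization p) := by
  haveI : NeZero n := ⟨hn.ne'⟩
  have hXeq : {s : Finset (ZMod n) | (EGZ n).IsClique ↑s ∧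
        ∀ t : Finset (ZMod n), (EGZ n).IsClique ↑t → s ⊆ t → s = t}
      = {s : Finset (ZMod n) | IsMaxCliqueZ n s} := rfl
  rw [hXeq]
  set X := {s : Finset (ZMod n) | IsMaxCliqueZ n s} with hX
  have hinj : Set.InjOn (fun s : Finset (ZMod n) => s.image zg) X := by
    intro s1 h1 s2 h2 h
    ext x
    rw [maxClique_mem_iff h1 x, maxClique_mem_iff h2 x]
    simp only at h
    rw [h]
  have himg : (fun s : Finset (ZMod n) => s.image zg) '' X = ↑(chainSet n) := by
    ext C
    simp only [Set.mem_image, Finset.mem_coe, mem_chainSet, hX, Set.mem_setOf_eq]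
    constructor
    · rintro ⟨s, hs, rfl⟩
      exact maxClique_image hs
    · intro hC
      exact ⟨(Finset.univ : Finset (ZMod n)).filter (fun x => zg x ∈ C),
        chain_filter_maxClique hC, image_filter_chain hC⟩
  calc X.ncard = ((fun s : Finset (ZMod n) => s.image zg) '' X).ncard :=
        (Set.ncard_image_of_injOn hinj).symm
    _ = (chainSet n).card := by rw [himg, Set.ncard_coe_finset]
    _ = _ := chainSet_card n hn.ne'
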